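/- arXiv:1804.05037 — 6 statements merged into one kernel-verified Lean document; each statement's English description precedes it below -/
import Mathlib

section
/- Partition lemma: Let Σ be a finite nonempty alphabet, let h be a history of even length less than n, and let W(I|·) and W(A|·) denote relative widths of sets A ⊆ I ⊆ Σ^n (defined by the standard recursion). Suppose m^A, m^I are integers with 0 ≤ m^A ≤ m^I ≤ W(I|h) and m^A ≤ W(A|h). Then there exist functions m^A_·, m^I_· : Σ → ℤ such that Σ_{u∈Σ} m^A_u = m^A, Σ_{u∈Σ} m^I_u = m^I, and for all u ∈ Σ: 0 ≤ m^A_u ≤ m^I_u ≤ W(I|hu) and m^A_u ≤ W(A|hu). -/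
open Classical in
noncomputable def widthAux {α : Type*} [Fintype α] [Nonempty α] (X : Set (List α)) :
    ℕ → List α → ℕ
  | 0, h => if h ∈ X then 1 else 0
  | g + 1, h =>
    if Even h.length then ∑ u : α, widthAux X g (h ++ [u])
    else Finset.univ.inf' Finset.univ_nonempty fun u : α => widthAux X g (h ++ [u])

noncomputable def width {α : Type*} [Fintype α] [Nonempty α] (n : ℕ) (X : Set (List α))
    (h : List α) : ℕ :=
  widthAux X (n - h.length) h

/-! At our turn the width of a history is the sum of the widths of its one-letter extensions, so
both budgets `m^A ≤ W(A|h)` and `m^I ≤ W(I|h)` are sums over `u ∈ Σ`. Split `m^A` first into parts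
`0 ≤ m^A_u ≤ W(A|hu)`, then split `m^I` into parts `m^A_u ≤ m^I_u ≤ W(I|hu)`; the second split is
possible because `W(A|hu) ≤ W(I|hu)` and `∑ m^A_u = m^A ≤ m^I`. Both splits are instances of one
fact: a value between `∑ lo` and `∑ hi` is a sum of terms `c_i ∈ [lo_i, hi_i]`. -/

open Finset

theorem Finset.exists_sum_eq_of_le_of_le {ι M : Type*} [AddCommGroup M] [LinearOrder M]
    [IsOrderedAddMonoid M] (s : Finset ι) {lo hi : ι → M} (hle : ∀ i ∈ s, lo i ≤ hi i)
    {m : M} (hlo : ∑ i ∈ s, lo i ≤ m) (hhi : m ≤ ∑ i ∈ s, hi i) :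
    ∃ c : ι → M, (∀ i ∈ s, lo i ≤ c i ∧ c i ≤ hi i) ∧ ∑ i ∈ s, c i = m := by
  classical
  induction s using Finset.cons_induction generalizing m with
  | empty => exact ⟨0, by simp, by simp_all [le_antisymm hhi hlo]⟩
  | cons x s hx ih =>
    rw [sum_cons] at hlo hhi
    have hle_s : ∀ i ∈ s, lo i ≤ hi i := fun i hi => hle i (mem_cons_of_mem hi)
    -- `x` takes the least value that leaves a remainder coverable by `∑ i ∈ s, hi i`.
    set cx := max (lo x) (m - ∑ i ∈ s, hi i)
    have hcx_le : cx ≤ hi x := max_le (hle x (mem_cons_self x s)) (sub_le_iff_le_add.mpr hhi)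
    have hrest_lo : ∑ i ∈ s, lo i ≤ m - cx := by
      obtain hcx | hcx : cx = lo x ∨ cx = m - ∑ i ∈ s, hi i := max_choice _ _
      · rw [hcx]; exact le_sub_iff_add_le'.mpr hlo
      · rw [hcx, sub_sub_cancel]; exact sum_le_sum hle_s
    have hrest_hi : m - cx ≤ ∑ i ∈ s, hi i := sub_le_comm.mp (le_max_right _ _)
    obtain ⟨c, hc, hsum⟩ := ih hle_s hrest_lo hrest_hi
    refine ⟨Function.update c x cx, fun i hi => ?_, ?_⟩
    · rcases mem_cons.mp hi with rfl | hi
      · simpa using ⟨le_max_left _ _, hcx_le⟩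
      · rw [Function.update_of_ne (ne_of_mem_of_not_mem hi hx)]
        exact hc i hi
    · rw [sum_cons, Function.update_self, sum_update_of_notMem hx, hsum, add_sub_cancel]

section Width

variable {α : Type*} [Fintype α] [Nonempty α]

theorem widthAux_mono {A I : Set (List α)} (hAI : A ⊆ I) (k : ℕ) (h : List α) :
    widthAux A k h ≤ widthAux I k h := by
  induction k generalizing h with
  | zero =>
    simp only [widthAux]
    split_ifs with hA hI
    exacts [le_rfl, absurd (hAI hA) hI, Nat.zero_le _, le_rfl]
  | succ k ih =>
    simp only [widthAux]
    split_ifs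
    · exact sum_le_sum fun u _ => ih _
    · exact le_inf' _ _ fun u hu => (inf'_le _ hu).trans (ih _)

theorem width_mono (n : ℕ) {A I : Set (List α)} (hAI : A ⊆ I) (h : List α) :
    width n A h ≤ width n I h :=
  widthAux_mono hAI _ h

theorem width_eq_sum_append (n : ℕ) (X : Set (List α)) {h : List α} (hlt : h.length < n)
    (heven : Even h.length) : width n X h = ∑ u : α, width n X (h ++ [u]) := by
  have hk : n - h.length = (n - h.length - 1) + 1 := by omega
  have hk_append (u : α) : n - (h ++ [u]).length = n - h.length - 1 := by
    rw [List.length_append, List.length_singleton, Nat.sub_add_eq]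
  rw [width, hk, widthAux, if_pos heven]
  simp only [width, hk_append]

end Width

theorem partition_lemma_general {α : Type*} [Fintype α] [Nonempty α] (n : ℕ)
    (A I : Set (List α)) (hAI : A ⊆ I)
    (h : List α) (hlt : h.length < n) (heven : Even h.length)
    (mA mI : ℤ) (h0 : 0 ≤ mA) (h1 : mA ≤ mI) (h2 : mI ≤ (width n I h : ℤ))
    (h3 : mA ≤ (width n A h : ℤ)) :
    ∃ f g : α → ℤ, (∑ u : α, f u) = mA ∧ (∑ u : α, g u) = mI ∧
      ∀ u : α, 0 ≤ f u ∧ f u ≤ g u ∧ g u ≤ (width n I (h ++ [u]) : ℤ) ∧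
        f u ≤ (width n A (h ++ [u]) : ℤ) := by
  rw [width_eq_sum_append n A hlt heven, Nat.cast_sum] at h3
  rw [width_eq_sum_append n I hlt heven, Nat.cast_sum] at h2
  obtain ⟨f, hf, hf_sum⟩ := univ.exists_sum_eq_of_le_of_le
    (lo := 0) (fun u _ => Nat.cast_nonneg (width n A (h ++ [u]))) (by simpa using h0) h3
  have hf_le_I (u : α) : f u ≤ width n I (h ++ [u]) :=
    (hf u (mem_univ u)).2.trans (Nat.cast_le.mpr (width_mono n hAI _))
  obtain ⟨g, hg, hg_sum⟩ := univ.exists_sum_eq_of_le_of_le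
    (fun u _ => hf_le_I u) (hf_sum ▸ h1) h2
  exact ⟨f, g, hf_sum, hg_sum, fun u =>
    ⟨(hf u (mem_univ u)).1, (hg u (mem_univ u)).1, (hg u (mem_univ u)).2, (hf u (mem_univ u)).2⟩⟩

theorem partition_lemma {α : Type*} [Fintype α] [Nonempty α] (n : ℕ)
    (A I : Set (List α)) (hAI : A ⊆ I) (hI : I ⊆ {w | w.length = n})
    (h : List α) (hlt : h.length < n) (heven : Even h.length)
    (mA mI : ℤ) (h0 : 0 ≤ mA) (h1 : mA ≤ mI) (h2 : mI ≤ (width n I h : ℤ))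
    (h3 : mA ≤ (width n A h : ℤ)) :
    ∃ f g : α → ℤ, (∑ u : α, f u) = mA ∧ (∑ u : α, g u) = mI ∧
      ∀ u : α, 0 ≤ f u ∧ f u ≤ g u ∧ g u ≤ (width n I (h ++ [u]) : ℤ) ∧
        f u ≤ (width n A (h ++ [u]) : ℤ) :=
  partition_lemma_general n A I hAI h hlt heven mA mI h0 h1 h2 h3
end

section
/- Necessity of the width conditions: suppose σ is a strategy such that for every adversary strategy τ, P_{σ,τ}(I) = 1, P_{σ,τ}(A) ≥ 1−ε, and P_{σ,τ}(π) ≤ ρ for every play π ∈ Σ^n. Then the width of I satisfies W(I) ≥ 1/ρ and the width of A satisfies W(A) ≥ (1−ε)/ρ, where W(X) = max_σ min_τ |X ∩ Π_{σ,τ}| and Π_{σ,τ} is the set of plays with positive probability under (σ,τ). -/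
/-- Probability of generating the continuation `rest` from history `h`, where the
player picks at even-length histories (strategy `σ`) and the adversary at odd-length
ones (strategy `τ`). -/
noncomputable def playProbAux {α : Type*} (σ τ : List α → α → ℝ) :
    List α → List α → ℝ
  | _, [] => 1
  | h, u :: rest => (if Even h.length then σ h u else τ h u) * playProbAux σ τ (h ++ [u]) rest

/-- Probability of the play `π`. -/
noncomputable def playProb {α : Type*} (σ τ : List α → α → ℝ) (π : List α) : ℝ :=
  playProbAux σ τ [] π

/-- `σ` is a valid (randomized) strategy for games of length `n`. -/
def IsStrategy {α : Type*} [Fintype α] (n : ℕ) (σ : List α → α → ℝ) : Prop :=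
  ∀ h : List α, h.length < n → (∀ u : α, 0 ≤ σ h u) ∧ (∑ u : α, σ h u) = 1

open Classical in
/-- Probability that the generated length-`n` play lies in `X`. -/
noncomputable def probOf {α : Type*} [Fintype α] (n : ℕ) (σ τ : List α → α → ℝ)
    (X : Set (List α)) : ℝ :=
  ∑ f : Fin n → α, if List.ofFn f ∈ X then playProb σ τ (List.ofFn f) else 0

/-!
Against any fixed adversary strategy, the probability of a set `X` of plays is a sum of
play probabilities over the plays of `X` in the support, and each summand is at most `ρ`;
hence `P(X) ≤ ρ · |X ∩ support|`. Taking `X = I` with `P(I) = 1` and `X = A` with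
`P(A) ≥ 1 - ε` gives both width bounds.
-/

section

variable {α : Type*} [Fintype α] {n : ℕ} {σ τ : List α → α → ℝ}

lemma playProbAux_nonneg (hσ : IsStrategy n σ) (hτ : IsStrategy n τ) (h rest : List α)
    (hlen : h.length + rest.length ≤ n) : 0 ≤ playProbAux σ τ h rest := by
  induction rest generalizing h with
  | nil => simp [playProbAux]
  | cons u rest ih =>
    have hlt : h.length < n := by simp only [List.length_cons] at hlen; omega
    have hmove : 0 ≤ if Even h.length then σ h u else τ h u := by
      split
      · exact (hσ h hlt).1 u
      · exact (hτ h hlt).1 u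
    exact mul_nonneg hmove (ih (h ++ [u]) (by simp only [List.length_append,
      List.length_cons, List.length_nil] at hlen ⊢; omega))

lemma playProb_ofFn_nonneg (hσ : IsStrategy n σ) (hτ : IsStrategy n τ) (f : Fin n → α) :
    0 ≤ playProb σ τ (List.ofFn f) :=
  playProbAux_nonneg hσ hτ [] _ (by simp)

lemma probOf_le_mul_ncard (hσ : IsStrategy n σ) (hτ : IsStrategy n τ) (X : Set (List α))
    {ρ : ℝ} (hρ : ∀ f : Fin n → α, playProb σ τ (List.ofFn f) ≤ ρ) :
    probOf n σ τ X ≤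
      ρ * Set.ncard {f : Fin n → α | List.ofFn f ∈ X ∧ 0 < playProb σ τ (List.ofFn f)} := by
  classical
  set S := Finset.univ.filter
    fun f : Fin n → α => List.ofFn f ∈ X ∧ 0 < playProb σ τ (List.ofFn f)
  have hcard : Set.ncard {f : Fin n → α | List.ofFn f ∈ X ∧ 0 < playProb σ τ (List.ofFn f)}
      = S.card := by
    rw [← Set.ncard_coe_finset]
    simp [S]
  have hsum : probOf n σ τ X = ∑ f ∈ S, playProb σ τ (List.ofFn f) := by
    rw [probOf, Finset.sum_filter]
    refine Finset.sum_congr rfl fun f _ => ?_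
    by_cases hX : List.ofFn f ∈ X
    · simp only [hX, if_true, true_and]
      split_ifs with hpos
      · rfl
      · exact le_antisymm (not_lt.mp hpos) (playProb_ofFn_nonneg hσ hτ f)
    · simp [hX]
  rw [hcard, hsum, mul_comm]
  simpa using Finset.sum_le_card_nsmul S _ ρ fun f _ => hρ f

end

theorem width_necessity_general {α : Type*} [Fintype α] (n : ℕ)
    (A I : Set (List α))
    (ε ρ : ℚ) (hρ0 : 0 < ρ)
    (σ : List α → α → ℝ) (hσ : IsStrategy n σ)
    (himpro : ∀ τ : List α → α → ℝ, IsStrategy n τ →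
      probOf n σ τ I = 1 ∧ probOf n σ τ A ≥ 1 - (ε : ℝ) ∧
      ∀ f : Fin n → α, playProb σ τ (List.ofFn f) ≤ (ρ : ℝ)) :
    ∀ τ : List α → α → ℝ, IsStrategy n τ →
      (1 / (ρ : ℝ) ≤
        (Set.ncard {f : Fin n → α | List.ofFn f ∈ I ∧ 0 < playProb σ τ (List.ofFn f)} : ℝ)) ∧
      ((1 - (ε : ℝ)) / (ρ : ℝ) ≤
        (Set.ncard {f : Fin n → α | List.ofFn f ∈ A ∧ 0 < playProb σ τ (List.ofFn f)} : ℝ)) := by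
  intro τ hτ
  obtain ⟨hI, hA, hbound⟩ := himpro τ hτ
  have hρ : (0 : ℝ) < ρ := by exact_mod_cast hρ0
  have hIbound := probOf_le_mul_ncard hσ hτ I hbound
  have hAbound := probOf_le_mul_ncard hσ hτ A hbound
  constructor
  · rw [div_le_iff₀ hρ]; linarith
  · rw [div_le_iff₀ hρ]; linarith

theorem width_necessity {α : Type*} [Fintype α] [Nonempty α] (n : ℕ)
    (A I : Set (List α)) (hAI : A ⊆ I) (hI : I ⊆ {w | w.length = n})
    (ε ρ : ℚ) (hε0 : 0 ≤ ε) (hε1 : ε ≤ 1) (hρ0 : 0 < ρ) (hρ1 : ρ ≤ 1)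
    (σ : List α → α → ℝ) (hσ : IsStrategy n σ)
    (himpro : ∀ τ : List α → α → ℝ, IsStrategy n τ →
      probOf n σ τ I = 1 ∧ probOf n σ τ A ≥ 1 - (ε : ℝ) ∧
      ∀ f : Fin n → α, playProb σ τ (List.ofFn f) ≤ (ρ : ℝ)) :
    ∀ τ : List α → α → ℝ, IsStrategy n τ →
      (1 / (ρ : ℝ) ≤
        (Set.ncard {f : Fin n → α | List.ofFn f ∈ I ∧ 0 < playProb σ τ (List.ofFn f)} : ℝ)) ∧
      ((1 - (ε : ℝ)) / (ρ : ℝ) ≤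
        (Set.ncard {f : Fin n → α | List.ofFn f ∈ A ∧ 0 < playProb σ τ (List.ofFn f)} : ℝ)) :=
  width_necessity_general n A I ε ρ hρ0 σ hσ himpro
end

section
/- Bounding the improviser weights: under the same setup (w_A ≤ w_I, w_I ≥ 1/ρ, α = min(ρ, 1/w_A) or 0 if w_A = 0, β = (1 − α·w_A)/(w_I − w_A) or 0 if w_I = w_A), we have max(α, β) ≤ ρ. -/
/-! Both weights are capped at `ρ`: `α` by construction, and `β` because the budget `1 - α wA`
still to be covered by the improviser is at most `ρ (wI - wA)`. When `α = ρ` this is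
`1 ≤ ρ wI`; when `α = 1 / wA` the budget is `0`. -/

lemma one_sub_min_one_div_mul_le {ρ w : ℝ} (hw : w ≠ 0) :
    1 - min ρ (1 / w) * w ≤ max (1 - ρ * w) 0 := by
  rcases min_cases ρ (1 / w) with ⟨h, -⟩ | ⟨h, -⟩
  · rw [h]
    exact le_max_left _ _
  · rw [h, one_div_mul_cancel hw, sub_self]
    exact le_max_right _ _

theorem improviser_weights_le_rho_general (ρ wA wI α β : ℝ)
    (hρ0 : 0 < ρ)
    (hwAI : wA ≤ wI) (hwI : 1 / ρ ≤ wI)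
    (hα0 : wA = 0 → α = 0) (hα : wA ≠ 0 → α = min ρ (1 / wA))
    (hβ0 : wI = wA → β = 0) (hβ : wI ≠ wA → β = (1 - α * wA) / (wI - wA)) :
    max α β ≤ ρ := by
  have hρwI : 1 ≤ ρ * wI := by rw [mul_comm]; exact (div_le_iff₀ hρ0).mp hwI
  have hα_le : α ≤ ρ := by
    rcases eq_or_ne wA 0 with h | h
    · exact (hα0 h).trans_le hρ0.le
    · exact (hα h).trans_le (min_le_left _ _)
  have budget : 1 - α * wA ≤ ρ * (wI - wA) := by
    rcases eq_or_ne wA 0 with h | h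
    · simpa [h, hα0 h] using hρwI
    · rw [hα h]
      exact (one_sub_min_one_div_mul_le h).trans
        (max_le (by linarith) (mul_nonneg hρ0.le (sub_nonneg.mpr hwAI)))
  have hβ_le : β ≤ ρ := by
    rcases eq_or_ne wI wA with h | h
    · exact (hβ0 h).trans_le hρ0.le
    · rw [hβ h, div_le_iff₀ (sub_pos.mpr (hwAI.lt_of_ne' h))]
      exact budget
  exact max_le hα_le hβ_le

theorem improviser_weights_le_rho (ρ wA wI α β : ℝ)
    (hρ0 : 0 < ρ) (hρ1 : ρ ≤ 1)
    (hwA : 0 ≤ wA) (hwAI : wA ≤ wI) (hwI : 1 / ρ ≤ wI)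
    (hα0 : wA = 0 → α = 0) (hα : wA ≠ 0 → α = min ρ (1 / wA))
    (hβ0 : wI = wA → β = 0) (hβ : wI ≠ wA → β = (1 - α * wA) / (wI - wA)) :
    max α β ≤ ρ :=
  improviser_weights_le_rho_general ρ wA wI α β hρ0 hwAI hwI hα0 hα hβ0 hβ
end

section
/- DFA width correspondence: let D be a DFA with state set V, transition function δ : V × Σ → V, accepting states T, and initial state q₀. Define C(v,i) for v ∈ V and 0 ≤ i ≤ n by: C(v,n) = indicator(v ∈ T); for i < n odd, C(v,i) = min_{u∈Σ} C(δ(v,u), i+1); for i < n even, C(v,i) = Σ_{u∈Σ} C(δ(v,u), i+1). Then for every history h ∈ Σ^{≤n}, the relative width W(X|h) of X = L(D) ∩ Σ^n (defined by the standard width recursion on histories) equals C(D(h), |h|), where D(h) is the state reached by running D on h from q₀. -/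
open Classical in
/-- `dfaCAux δ T g v i` computes the table entry `C(v, i)` with fuel `g = n - i`. -/
noncomputable def dfaCAux {α V : Type*} [Fintype α] [Nonempty α]
    (δ : V → α → V) (T : Set V) : ℕ → V → ℕ → ℕ
  | 0, v, _ => if v ∈ T then 1 else 0
  | g + 1, v, i =>
    if Even i then ∑ u : α, dfaCAux δ T g (δ v u) (i + 1)
    else Finset.univ.inf' Finset.univ_nonempty fun u : α => dfaCAux δ T g (δ v u) (i + 1)

/-- `C(v, i)` for the length-`n` game. -/
noncomputable def dfaC {α V : Type*} [Fintype α] [Nonempty α]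
    (δ : V → α → V) (T : Set V) (n i : ℕ) (v : V) : ℕ :=
  dfaCAux δ T (n - i) v i

theorem widthAux_eq_dfaCAux {α V : Type*} [Fintype α] [Nonempty α]
    (δ : V → α → V) (T : Set V) (q0 : V) (n : ℕ) :
    ∀ (g : ℕ) (h : List α), h.length + g = n →
      widthAux {w : List α | w.length = n ∧ w.foldl δ q0 ∈ T} g h =
        dfaCAux δ T g (h.foldl δ q0) h.length
  | 0, h, hlen => by
    obtain rfl : h.length = n := hlen
    simp only [widthAux, dfaCAux]
    congr 1
    exact propext (and_iff_right rfl)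
  | g + 1, h, hlen => by
    have hstep (u : α) :
        widthAux {w : List α | w.length = n ∧ w.foldl δ q0 ∈ T} g (h ++ [u]) =
          dfaCAux δ T g (δ (h.foldl δ q0) u) (h.length + 1) := by
      simpa [List.foldl_append] using
        widthAux_eq_dfaCAux δ T q0 n g (h ++ [u]) (by rw [List.length_append, List.length_singleton]; omega)
    simp only [widthAux, dfaCAux, hstep]

theorem dfa_width_eq {α V : Type*} [Fintype α] [Nonempty α]
    (δ : V → α → V) (T : Set V) (q0 : V) (n : ℕ)
    (h : List α) (hh : h.length ≤ n) :
    width n {w : List α | w.length = n ∧ w.foldl δ q0 ∈ T} h =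
      dfaC δ T n h.length (h.foldl δ q0) :=
  widthAux_eq_dfaCAux δ T q0 n (n - h.length) h (Nat.add_sub_of_le hh)
end

section
/- Impossibility of per-adversary-optimal strategies: there exists a finite two-player alternating game over an alphabet with at most 2 symbols per move, a length n, and a target set A of plays, together with two deterministic adversary strategies τ₁, τ₂, such that: there exists a strategy σ₁ with P_{σ₁,τ₁}(A) = 1, there exists a strategy σ₂ with P_{σ₂,τ₂}(A) = 1, but there is no single strategy σ with both P_{σ,τ₁}(A) = 1 and P_{σ,τ₂}(A) = 1. -/
open Classical in
/-- The strategy deterministically playing `t h` at history `h`. -/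
noncomputable def detStrat {α : Type*} (t : List α → α) : List α → α → ℝ :=
  fun h u => if u = t h then 1 else 0

/-!
The first player moves once, then the adversary, and the play is won iff the adversary repeats
the first move. Against the adversary that always answers `c`, the winning probability is exactly
the weight `σ` puts on `c` at the start; surely winning against both constant adversaries would
therefore need weight `1` on two distinct moves.
-/

section TwoMoveGames

variable {α : Type*} [Fintype α]

theorem isStrategy_detStrat (n : ℕ) (t : List α → α) : IsStrategy n (detStrat t) := by
  classical
  refine fun h _ => ⟨fun u => ?_, ?_⟩
  · unfold detStrat; split_ifs <;> norm_num
  · simp [detStrat]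

theorem IsStrategy.add_le_one {n : ℕ} {σ : List α → α → ℝ} (hσ : IsStrategy n σ)
    {h : List α} (hh : h.length < n) {a b : α} (hab : a ≠ b) : σ h a + σ h b ≤ 1 := by
  classical
  obtain ⟨hnonneg, hsum⟩ := hσ h hh
  calc σ h a + σ h b = ∑ u ∈ {a, b}, σ h u := (Finset.sum_pair hab).symm
    _ ≤ ∑ u, σ h u := Finset.sum_le_univ_sum_of_nonneg hnonneg
    _ = 1 := hsum

open Classical in
theorem probOf_two (σ τ : List α → α → ℝ) (X : Set (List α)) :
    probOf 2 σ τ X = ∑ a, ∑ b, if [a, b] ∈ X then σ [] a * τ [a] b else 0 := by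
  rw [probOf, ← Equiv.sum_comp (piFinTwoEquiv fun _ => α).symm, Fintype.sum_prod_type]
  simp [playProb, playProbAux, List.ofFn_succ, piFinTwoEquiv]

def diagonalPairs : Set (List α) := {l | ∃ a, l = [a, a]}

theorem probOf_diagonalPairs_detStrat_const (σ : List α → α → ℝ) (c : α) :
    probOf 2 σ (detStrat fun _ => c) diagonalPairs = σ [] c := by
  classical
  rw [probOf_two]
  simp [diagonalPairs, detStrat]

end TwoMoveGames

/-- There is a finite alternating game (alphabet of size 2) with two deterministic
adversaries such that some strategy surely wins against each adversary separately,
but no single strategy surely wins against both. -/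
theorem no_per_adversary_optimal_strategy :
    ∃ (n : ℕ) (A : Set (List (Fin 2))) (τ₁ τ₂ : List (Fin 2) → Fin 2),
      (∃ σ₁, IsStrategy n σ₁ ∧ probOf n σ₁ (detStrat τ₁) A = 1) ∧
      (∃ σ₂, IsStrategy n σ₂ ∧ probOf n σ₂ (detStrat τ₂) A = 1) ∧
      ¬ ∃ σ, IsStrategy n σ ∧ probOf n σ (detStrat τ₁) A = 1 ∧
          probOf n σ (detStrat τ₂) A = 1 := by
  refine ⟨2, diagonalPairs, fun _ => 0, fun _ => 1, ?_, ?_, ?_⟩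
  · exact ⟨detStrat fun _ => 0, isStrategy_detStrat 2 _,
      by simp [probOf_diagonalPairs_detStrat_const, detStrat]⟩
  · exact ⟨detStrat fun _ => 1, isStrategy_detStrat 2 _,
      by simp [probOf_diagonalPairs_detStrat_const, detStrat]⟩
  · rintro ⟨σ, hσ, h₀, h₁⟩
    rw [probOf_diagonalPairs_detStrat_const] at h₀ h₁
    have hsum := hσ.add_le_one (h := []) two_pos Fin.zero_ne_one
    linarith
end

section
/- Existence of plays achieving the width: with W(X|h) the recursively-defined relative width over a finite alphabet Σ, if W(X|h) ≥ 1 for a history h, then for every function τ assigning to each odd-length history extending h a symbol of Σ (a deterministic adversary), there exists a word π with hπ ∈ X such that at every odd position of hπ beyond |h|, the symbol of π agrees with τ applied to the preceding prefix. -/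
/-- `π` (a continuation of `h`) is consistent with the deterministic adversary `t`:
at every odd position `i` of `h ++ π` beyond `h`, the symbol played equals `t`
applied to the preceding prefix. -/
def ConsistentWith {α : Type*} (n : ℕ) (h : List α) (t : List α → α) (π : List α) : Prop :=
  ∀ i : ℕ, h.length ≤ i → i < n → Odd i →
    (h ++ π).take (i + 1) = (h ++ π).take i ++ [t ((h ++ π).take i)]

/-
A positive width is propagated down the game tree along a play: at an even position some
child has positive width (a sum of naturals is positive only if a summand is), at an odd
position every child has (a minimum is positive only if all its arguments are), in particular
the one chosen by the adversary. At the leaves, positive width means membership in `X`.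
-/

namespace ConsistentWith

variable {α : Type*} {n m : ℕ} {h π : List α} {t : List α → α}

theorem mono (hmn : m ≤ n) (hc : ConsistentWith n h t π) : ConsistentWith m h t π :=
  fun i hi him hodd => hc i hi (him.trans_le hmn) hodd

theorem nil : ConsistentWith h.length h t [] :=
  fun _ hi hin _ => absurd hi (Nat.not_le.mpr hin)

theorem cons {u : α} (hu : Odd h.length → u = t h) (hc : ConsistentWith n (h ++ [u]) t π) :
    ConsistentWith n h t (u :: π) := by
  intro i hi hin hodd
  rcases hi.eq_or_lt with rfl | hlt
  · simp [List.take_append, hu hodd]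
  · simpa using hc i (by simpa using hlt) hin hodd

end ConsistentWith

section widthAux

variable {α : Type*} [Fintype α] [Nonempty α] {X : Set (List α)} {g : ℕ} {h : List α}

theorem mem_of_one_le_widthAux_zero (hw : 1 ≤ widthAux X 0 h) : h ∈ X := by
  by_contra hh
  simp [widthAux, hh] at hw

theorem exists_one_le_widthAux_of_even (he : Even h.length) (hw : 1 ≤ widthAux X (g + 1) h) :
    ∃ u, 1 ≤ widthAux X g (h ++ [u]) := by
  simp only [widthAux, if_pos he, Nat.one_le_iff_ne_zero, ne_eq,
    Finset.sum_eq_zero_iff, Finset.mem_univ, true_implies, not_forall] at hw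
  simpa only [Nat.one_le_iff_ne_zero] using hw

theorem one_le_widthAux_of_odd (ho : ¬Even h.length) (hw : 1 ≤ widthAux X (g + 1) h) (u : α) :
    1 ≤ widthAux X g (h ++ [u]) := by
  rw [widthAux, if_neg ho] at hw
  exact hw.trans (Finset.inf'_le _ (Finset.mem_univ u))

theorem exists_consistent_of_one_le_widthAux (t : List α → α) :
    ∀ {g : ℕ} {h : List α}, 1 ≤ widthAux X g h →
      ∃ π, h ++ π ∈ X ∧ ConsistentWith (h.length + g) h t π
  | 0, h, hw => ⟨[], by simpa using mem_of_one_le_widthAux_zero hw, ConsistentWith.nil⟩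
  | g + 1, h, hw => by
    have key : ∃ u, (Odd h.length → u = t h) ∧ 1 ≤ widthAux X g (h ++ [u]) := by
      by_cases he : Even h.length
      · obtain ⟨u, hu⟩ := exists_one_le_widthAux_of_even he hw
        exact ⟨u, fun ho => absurd he (Nat.not_even_iff_odd.mpr ho), hu⟩
      · exact ⟨t h, fun _ => rfl, one_le_widthAux_of_odd he hw (t h)⟩
    obtain ⟨u, hu, hwu⟩ := key
    obtain ⟨π, hmem, hc⟩ := exists_consistent_of_one_le_widthAux t hwu
    refine ⟨u :: π, by simpa using hmem, ConsistentWith.cons hu ?_⟩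
    simpa [Nat.add_right_comm, Nat.add_assoc] using hc

end widthAux

theorem width_pos_play_exists_general {α : Type*} [Fintype α] [Nonempty α] (n : ℕ)
    (X : Set (List α))
    (h : List α) (hw : 1 ≤ width n X h)
    (t : List α → α) :
    ∃ π : List α, h ++ π ∈ X ∧ ConsistentWith n h t π := by
  obtain ⟨π, hmem, hc⟩ := exists_consistent_of_one_le_widthAux t hw
  exact ⟨π, hmem, hc.mono (by omega)⟩

theorem width_pos_play_exists {α : Type*} [Fintype α] [Nonempty α] (n : ℕ)
    (X : Set (List α)) (hX : X ⊆ {w | w.length = n})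
    (h : List α) (hh : h.length ≤ n) (hw : 1 ≤ width n X h)
    (t : List α → α) :
    ∃ π : List α, h ++ π ∈ X ∧ ConsistentWith n h t π :=
  width_pos_play_exists_general n X h hw t
end
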